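/- For all r ≥ 2 and m ≥ 1, |Reg_r(rm)| = (rm-1) · (rm-1)(rm-2)⋯(rm-r+1) · |Reg_r(rm-r)|, where the middle factor is the falling factorial (rm-1)_{r-1}. -/

import Mathlib

/-!
Write `a n = |Reg_r(n)|` (`regCount`) and, for `s : ZMod r`, let `g n s` (`resCount`) count the
permutations of `Option (Fin n)` in which every cycle of length divisible by `r` passes through
`none` and the cycle through `none` has length `≡ s`; let `T n` count those with no condition on
that length.
Taking `none` out of its cycle (`Equiv.Perm.decomposeOption`) gives
`g (n+1) s = [s = 1] a (n+1) + (n+1) g n (s-1)` and `T (n+1) = a (n+1) + (n+1) T n`, while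
`a (n+1) + g n 0 = T n`. Eliminating `T`,
`a (n+2) = (n+2) a (n+1) - (n+1) (g n (-1) - g n 0)`, and a joint induction shows
`g n (s-1) - g n s = ([s = n+2] - [s = 1]) a n`. Hence `a (n+1) = (n+1) a n` unless `r ∣ n+1`,
when `a (n+1) = n a n`; running this from `rm - r` up to `rm` gives the theorem.
-/

open Equiv Function

theorem Function.minimalPeriod_eq_of_iterate_apply {α β : Type*} {f : α → α} {f' : β → β}
    {g : α → β} (hg : Injective g) {x : α} (h : ∀ n, f'^[n] (g x) = g (f^[n] x)) :
    minimalPeriod f' (g x) = minimalPeriod f x :=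
  minimalPeriod_eq_minimalPeriod_iff.2 fun n => by
    simp only [IsPeriodicPt, IsFixedPt, h, hg.eq_iff]

theorem ZMod.zero_eq_natCast_add_two_iff {r : ℕ} (n : ℕ) :
    (0 : ZMod r) = n + 2 ↔ r ∣ n + 2 := by
  rw [eq_comm, ← Nat.cast_ofNat, ← Nat.cast_add, ZMod.natCast_eq_zero_iff]

namespace Equiv.Perm

variable {α β : Type*}

theorem sameCycle_iff_exists_iterate [Finite α] {σ : Perm α} {x y : α} :
    σ.SameCycle x y ↔ ∃ k : ℕ, σ^[k] x = y := by
  simp only [iterate_eq_pow]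
  exact ⟨SameCycle.exists_nat_pow_eq, fun ⟨k, hk⟩ => ⟨k, by rwa [zpow_natCast]⟩⟩

theorem minimalPeriod_pos [Finite α] (σ : Perm α) (x : α) : 0 < minimalPeriod σ x :=
  minimalPeriod_pos_of_mem_periodicPts (σ.injective.mem_periodicPts x)

theorem SameCycle.minimalPeriod_eq [Finite α] {σ : Perm α} {x y : α} (h : σ.SameCycle x y) :
    minimalPeriod σ y = minimalPeriod σ x := by
  obtain ⟨k, rfl⟩ := sameCycle_iff_exists_iterate.1 h
  exact minimalPeriod_apply_iterate (σ.injective.mem_periodicPts x) k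

theorem iterate_permCongr_apply (e : α ≃ β) (σ : Perm α) (n : ℕ) (x : α) :
    (e.permCongr σ)^[n] (e x) = e (σ^[n] x) :=
  (Semiconj.iterate_right (f := e) (fun y => by simp [permCongr_apply]) n x).symm

theorem minimalPeriod_permCongr (e : α ≃ β) (σ : Perm α) (x : α) :
    minimalPeriod (e.permCongr σ) (e x) = minimalPeriod σ x :=
  minimalPeriod_eq_of_iterate_apply e.injective (iterate_permCongr_apply e σ · x)

theorem sameCycle_permCongr [Finite α] (e : α ≃ β) (σ : Perm α) (x y : α) :
    (e.permCongr σ).SameCycle (e x) (e y) ↔ σ.SameCycle x y := by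
  have : Finite β := .of_equiv α e
  simp only [sameCycle_iff_exists_iterate, iterate_permCongr_apply, e.apply_eq_iff_eq]

theorem minimalPeriod_optionCongr_none (τ : Perm α) :
    minimalPeriod (optionCongr τ) none = 1 :=
  minimalPeriod_eq_one_iff_isFixedPt.2 rfl

theorem minimalPeriod_optionCongr_some (τ : Perm α) (x : α) :
    minimalPeriod (optionCongr τ) (some x) = minimalPeriod τ x :=
  minimalPeriod_eq_of_iterate_apply (Option.some_injective _) fun n =>
    (Semiconj.iterate_right (f := some) (fun _ => rfl) n x).symm

/-- `σ ∈ Reg_r`. -/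
def IsReg (r : ℕ) (σ : Perm α) : Prop := ∀ x, ¬ r ∣ minimalPeriod σ x

def IsRegAwayFrom (r : ℕ) (a : α) (σ : Perm α) : Prop :=
  ∀ x, ¬ σ.SameCycle a x → ¬ r ∣ minimalPeriod σ x

variable {r : ℕ}

theorem isReg_iff_isRegAwayFrom [Finite α] (a : α) {σ : Perm α} :
    σ.IsReg r ↔ σ.IsRegAwayFrom r a ∧ ¬ r ∣ minimalPeriod σ a := by
  refine ⟨fun h => ⟨fun x _ => h x, h a⟩, fun ⟨h, ha⟩ x => ?_⟩
  by_cases hx : σ.SameCycle a x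
  · rwa [hx.minimalPeriod_eq]
  · exact h x hx

theorem card_isReg_congr (e : α ≃ β) :
    Nat.card {σ : Perm α // σ.IsReg r} = Nat.card {σ : Perm β // σ.IsReg r} :=
  Nat.card_congr <| e.permCongr.subtypeEquiv fun σ => by
    simp only [IsReg, e.surjective.forall, minimalPeriod_permCongr]

theorem card_isRegAwayFrom_congr [Finite α] (e : α ≃ β) (a : α) (p : ℕ → Prop) :
    Nat.card {σ : Perm α // σ.IsRegAwayFrom r a ∧ p (minimalPeriod σ a)} =
      Nat.card {σ : Perm β // σ.IsRegAwayFrom r (e a) ∧ p (minimalPeriod σ (e a))} :=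
  Nat.card_congr <| e.permCongr.subtypeEquiv fun σ => by
    simp only [IsRegAwayFrom, e.surjective.forall, sameCycle_permCongr, minimalPeriod_permCongr]

theorem isRegAwayFrom_optionCongr_iff (τ : Perm α) :
    IsRegAwayFrom r none (optionCongr τ) ↔ τ.IsReg r := by
  have hnone : ∀ z, SameCycle (optionCongr τ) none z ↔ none = z :=
    fun z => ⟨fun h => h.eq_of_left rfl, by rintro rfl; rfl⟩
  simp [IsRegAwayFrom, IsReg, hnone, Option.forall, minimalPeriod_optionCongr_some]

section insertNone

variable [DecidableEq α]

/-- `τ` with `none` inserted into the cycle through `a`, just before `a`. -/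
def insertNone (a : α) (τ : Perm α) : Perm (Option α) :=
  swap none (some a) * optionCongr τ

variable (a : α) (τ : Perm α)

@[simp]
theorem insertNone_none : insertNone a τ none = some a := by
  simp [insertNone]

theorem insertNone_some (x : α) :
    insertNone a τ (some x) = if τ x = a then none else some (τ x) := by
  split_ifs with h <;> simp [insertNone, h, swap_apply_of_ne_of_ne]

theorem iterate_insertNone_none {k : ℕ} (hk : k < minimalPeriod τ a) :
    (insertNone a τ)^[k + 1] none = some (τ^[k] a) := by
  induction k with
  | zero => simp
  | succ k ih =>
    rw [iterate_succ_apply', ih (by omega), insertNone_some, ← iterate_succ_apply' τ, if_neg]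
    exact not_isPeriodicPt_of_pos_of_lt_minimalPeriod k.succ_ne_zero hk

theorem minimalPeriod_insertNone_none [Finite α] :
    minimalPeriod (insertNone a τ) none = minimalPeriod τ a + 1 := by
  obtain ⟨L, hL⟩ := Nat.exists_eq_add_one_of_ne_zero (minimalPeriod_pos τ a).ne'
  have hper : IsPeriodicPt (insertNone a τ) (minimalPeriod τ a + 1) none := by
    rw [IsPeriodicPt, IsFixedPt, hL, iterate_succ_apply', iterate_insertNone_none a τ (by omega),
      insertNone_some, if_pos]
    have h := iterate_minimalPeriod (f := τ) (x := a)
    rwa [hL, iterate_succ_apply'] at h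
  refine le_antisymm (hper.minimalPeriod_le (Nat.succ_pos _)) ?_
  by_contra! hlt
  obtain ⟨k, hk⟩ :=
    Nat.exists_eq_add_one_of_ne_zero (minimalPeriod_pos (insertNone a τ) none).ne'
  have h := iterate_insertNone_none a τ (k := k) (by omega)
  rw [← hk, iterate_minimalPeriod] at h
  exact Option.some_ne_none _ h.symm

theorem sameCycle_insertNone_none_some [Finite α] {x : α} :
    (insertNone a τ).SameCycle none (some x) ↔ τ.SameCycle a x := by
  rw [sameCycle_iff_exists_iterate, sameCycle_iff_exists_iterate]
  constructor
  · rintro ⟨j, hj⟩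
    rw [← iterate_mod_minimalPeriod_eq, minimalPeriod_insertNone_none] at hj
    have hlt := Nat.mod_lt j (by omega : 0 < minimalPeriod τ a + 1)
    obtain ⟨k, hk⟩ := Nat.exists_eq_add_one_of_ne_zero (n := j % (minimalPeriod τ a + 1))
      fun h0 => by simp [h0] at hj
    rw [hk, iterate_insertNone_none a τ (by omega)] at hj
    exact ⟨k, Option.some_injective _ hj⟩
  · rintro ⟨k, rfl⟩
    refine ⟨k % minimalPeriod τ a + 1, ?_⟩
    rw [iterate_insertNone_none a τ (Nat.mod_lt _ (minimalPeriod_pos τ a)),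
      iterate_mod_minimalPeriod_eq]

theorem minimalPeriod_insertNone_some [Finite α] {x : α} (hx : ¬ τ.SameCycle a x) :
    minimalPeriod (insertNone a τ) (some x) = minimalPeriod τ x := by
  refine minimalPeriod_eq_of_iterate_apply (Option.some_injective _) fun n => ?_
  induction n with
  | zero => rfl
  | succ n ih =>
    rw [iterate_succ_apply', iterate_succ_apply', ih, insertNone_some, if_neg]
    intro h
    exact hx (sameCycle_iff_exists_iterate.2 ⟨n + 1, by rw [iterate_succ_apply', h]⟩).symm

theorem isRegAwayFrom_insertNone_iff [Finite α] :
    (insertNone a τ).IsRegAwayFrom r none ↔ τ.IsRegAwayFrom r a := by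
  unfold IsRegAwayFrom
  refine ⟨fun h x hx => ?_, fun h => ?_⟩
  · rw [← minimalPeriod_insertNone_some a τ hx]
    exact h (some x) (by rwa [sameCycle_insertNone_none_some])
  · rintro (_ | x) hx
    · exact absurd (SameCycle.refl _ _) hx
    · rw [sameCycle_insertNone_none_some] at hx
      rw [minimalPeriod_insertNone_some a τ hx]
      exact h x hx

theorem card_subtype_perm_option [Fintype α] (P : Perm (Option α) → Prop) :
    Nat.card {σ // P σ} = Nat.card {τ : Perm α // P (optionCongr τ)} +
      ∑ a, Nat.card {τ : Perm α // P (insertNone a τ)} := by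
  have e : {σ // P σ} ≃ Σ y : Option α, {τ : Perm α // P (decomposeOption.symm (y, τ))} :=
    (decomposeOption.subtypeEquiv fun σ => by rw [decomposeOption.symm_apply_apply]).trans
      (subtypeProdEquivSigmaSubtype fun y τ => P (decomposeOption.symm (y, τ)))
  rw [Nat.card_congr e, Nat.card_sigma, Fintype.sum_option]
  simp [insertNone, ← one_def]

end insertNone

noncomputable def regCount (r n : ℕ) : ℕ := Nat.card {σ : Perm (Fin n) // σ.IsReg r}

noncomputable def regAwayCount (r n : ℕ) (p : ℕ → Prop) : ℕ :=
  Nat.card {σ : Perm (Option (Fin n)) // σ.IsRegAwayFrom r none ∧ p (minimalPeriod σ none)}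

theorem regCount_zero : regCount r 0 = 1 := by
  rw [regCount, Nat.card_eq_one_iff_unique]
  exact ⟨inferInstance, ⟨⟨1, fun x => x.elim0⟩⟩⟩

theorem regAwayCount_zero (p : ℕ → Prop) [DecidablePred p] :
    regAwayCount r 0 p = if p 1 then 1 else 0 := by
  have h (σ : Perm (Option (Fin 0))) :
      σ.IsRegAwayFrom r none ∧ p (minimalPeriod σ none) ↔ p 1 := by
    simp [IsRegAwayFrom, minimalPeriod_eq_one_of_subsingleton, Subsingleton.elim _ none,
      SameCycle.refl]
  simp only [regAwayCount, h]
  split_ifs <;> simp [*]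

theorem regAwayCount_succ (n : ℕ) (p : ℕ → Prop) [DecidablePred p] :
    regAwayCount r (n + 1) p = (if p 1 then regCount r (n + 1) else 0) +
      (n + 1) * regAwayCount r n (fun k => p (k + 1)) := by
  have hinsert (a : Fin (n + 1)) :
      Nat.card {τ : Perm (Fin (n + 1)) //
          (insertNone a τ).IsRegAwayFrom r none ∧ p (minimalPeriod (insertNone a τ) none)} =
        regAwayCount r n fun k => p (k + 1) := by
    simp only [isRegAwayFrom_insertNone_iff, minimalPeriod_insertNone_none]
    rw [card_isRegAwayFrom_congr (finSuccEquiv' a) a fun k => p (k + 1), finSuccEquiv'_at]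
    rfl
  rw [regAwayCount, card_subtype_perm_option]
  simp only [isRegAwayFrom_optionCongr_iff, minimalPeriod_optionCongr_none, hinsert]
  split_ifs <;> simp [regCount, *]

theorem regCount_succ_eq_regAwayCount (n : ℕ) :
    regCount r (n + 1) = regAwayCount r n fun k => ¬ r ∣ k := by
  rw [regCount, card_isReg_congr (finSuccEquiv n), regAwayCount]
  simp only [isReg_iff_isRegAwayFrom none]

theorem regAwayCount_add_regAwayCount_not (n : ℕ) (p : ℕ → Prop) :
    regAwayCount r n p + regAwayCount r n (fun k => ¬ p k) = regAwayCount r n fun _ => True := by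
  classical
  simp only [regAwayCount, Nat.card_eq_fintype_card, Fintype.card_subtype, and_true,
    ← Finset.filter_filter]
  exact Finset.card_filter_add_card_filter_not _

section Residues

noncomputable def resCount (r n : ℕ) (s : ZMod r) : ℕ :=
  regAwayCount r n fun k => (k : ZMod r) = s

theorem resCount_zero (s : ZMod r) : resCount r 0 s = if s = 1 then 1 else 0 := by
  simp only [resCount, regAwayCount_zero, Nat.cast_one, eq_comm]

theorem resCount_succ (n : ℕ) (s : ZMod r) :
    resCount r (n + 1) s =
      (if s = 1 then regCount r (n + 1) else 0) + (n + 1) * resCount r n (s - 1) := by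
  simp only [resCount, regAwayCount_succ, Nat.cast_one, @eq_comm _ (1 : ZMod r)]
  simp only [Nat.cast_add, Nat.cast_one, ← eq_sub_iff_add_eq]

theorem regCount_succ_add_resCount_zero (n : ℕ) :
    regCount r (n + 1) + resCount r n 0 = regAwayCount r n fun _ => True := by
  rw [regCount_succ_eq_regAwayCount, ← regAwayCount_add_regAwayCount_not n (r ∣ ·), add_comm]
  simp only [resCount, ZMod.natCast_eq_zero_iff]

theorem resCount_sub_succ {n : ℕ}
    (hA : ¬ r ∣ n + 1 → regCount r (n + 1) = (n + 1) * regCount r n)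
    (hE : ∀ s : ZMod r, (resCount r n (s - 1) : ℤ) - resCount r n s =
      ((if s = n + 2 then 1 else 0) - if s = 1 then 1 else 0) * regCount r n)
    (s : ZMod r) :
    (resCount r (n + 1) (s - 1) : ℤ) - resCount r (n + 1) s =
      ((if s = ((n + 1 : ℕ) : ZMod r) + 2 then 1 else 0) - if s = 1 then 1 else 0) *
        regCount r (n + 1) := by
  have hE' := hE (s - 1)
  have c1 : s - 1 = 1 ↔ s = 2 := by rw [sub_eq_iff_eq_add, one_add_one_eq_two]
  have c2 : s - 1 = n + 2 ↔ s = n + 1 + 2 := by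
    rw [sub_eq_iff_eq_add]
    ring_nf
  rw [resCount_succ, resCount_succ]
  push_cast
  simp only [c1, c2] at hE' ⊢
  by_cases hr : r ∣ n + 1
  · -- `n + 3 = 2` in `ZMod r`, so the two indicators in `hE'` cancel
    have hz : (n : ZMod r) + 1 = 0 := by exact_mod_cast (ZMod.natCast_eq_zero_iff _ _).2 hr
    rw [hz, zero_add] at hE' ⊢
    split_ifs at hE' ⊢ <;> linear_combination (n + 1 : ℤ) * hE'
  · rw [hA hr]
    push_cast
    split_ifs at hE' ⊢ <;> linear_combination (n + 1 : ℤ) * hE'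

variable [Fact (1 < r)]

theorem regCount_add_two (n : ℕ) :
    (regCount r (n + 2) : ℤ) =
      (n + 2) * regCount r (n + 1) - (n + 1) * (resCount r n (0 - 1) - resCount r n 0) := by
  have h1 := regCount_succ_add_resCount_zero (r := r) (n + 1)
  rw [regAwayCount_succ, if_pos trivial, ← regCount_succ_add_resCount_zero, resCount_succ,
    if_neg one_ne_zero.symm] at h1
  zify at h1
  linear_combination h1

theorem resCount_sub_and_regCount_succ (n : ℕ) :
    (∀ s : ZMod r, (resCount r n (s - 1) : ℤ) - resCount r n s =
      ((if s = n + 2 then 1 else 0) - if s = 1 then 1 else 0) * regCount r n) ∧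
    (¬ r ∣ n + 1 → regCount r (n + 1) = (n + 1) * regCount r n) := by
  induction n with
  | zero =>
    refine ⟨fun s => ?_, fun _ => ?_⟩
    · simp only [resCount_zero, regCount_zero, sub_eq_iff_eq_add, one_add_one_eq_two,
        Nat.cast_zero, zero_add]
      push_cast
      ring
    · have h := regCount_succ_add_resCount_zero (r := r) 0
      rw [resCount_zero, if_neg one_ne_zero.symm, regAwayCount_zero, if_pos trivial] at h
      rw [regCount_zero]
      simpa using h
  | succ n ih =>
    obtain ⟨hE, hA⟩ := ih
    refine ⟨resCount_sub_succ hA hE, fun hr => ?_⟩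
    have h := regCount_add_two (r := r) n
    rw [hE 0, if_neg zero_ne_one, if_neg (mt (ZMod.zero_eq_natCast_add_two_iff n).1 hr)] at h
    zify
    linear_combination h

theorem regCount_succ_of_not_dvd {n : ℕ} (h : ¬ r ∣ n + 1) :
    regCount r (n + 1) = (n + 1) * regCount r n :=
  (resCount_sub_and_regCount_succ n).2 h

theorem regCount_succ_of_dvd {n : ℕ} (h : r ∣ n + 1) :
    regCount r (n + 1) = n * regCount r n := by
  have hr1 : ¬ r ∣ 1 := fun h1 => (Fact.out : 1 < r).ne' (Nat.dvd_one.1 h1)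
  obtain _ | n := n
  · exact absurd h hr1
  have hA := regCount_succ_of_not_dvd fun h1 => hr1 ((Nat.dvd_add_right h1).1 h)
  have h2 := regCount_add_two (r := r) n
  rw [(resCount_sub_and_regCount_succ n).1 0, if_neg zero_ne_one,
    if_pos ((ZMod.zero_eq_natCast_add_two_iff n).2 h)] at h2
  zify at hA ⊢
  linear_combination h2 + hA

theorem regCount_add_eq_descFactorial_mul {n j : ℕ}
    (h : ∀ i, n < i → i ≤ n + j → ¬ r ∣ i) :
    regCount r (n + j) = (n + j).descFactorial j * regCount r n := by
  induction j with
  | zero => simp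
  | succ j ih =>
    rw [← add_assoc, regCount_succ_of_not_dvd (h (n + j + 1) (by omega) le_rfl),
      ih fun i h1 h2 => h i h1 (by omega), Nat.succ_descFactorial_succ, mul_assoc]

end Residues

end Equiv.Perm

/-- `|Reg_r(rm)| = (rm-1) · (rm-1)_{r-1} · |Reg_r(rm-r)|`. -/
theorem stmt12 (r m : ℕ) (hr : 2 ≤ r) (hm : 1 ≤ m) :
    Nat.card {σ : Equiv.Perm (Fin (r * m)) //
        ∀ x, ¬ r ∣ Function.minimalPeriod ⇑σ x} =
      (r * m - 1) * Nat.descFactorial (r * m - 1) (r - 1) *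
        Nat.card {σ : Equiv.Perm (Fin (r * m - r)) //
          ∀ x, ¬ r ∣ Function.minimalPeriod ⇑σ x} := by
  have : Fact (1 < r) := ⟨hr⟩
  have hrm : r ≤ r * m := Nat.le_mul_of_pos_right r hm
  have hN : r * m - 1 + 1 = r * m := by omega
  have hgap : ∀ i, r * m - r < i → i ≤ r * m - r + (r - 1) → ¬ r ∣ i := fun i h1 h2 =>
    Nat.not_dvd_of_lt_of_lt_mul_succ (k := m - 1) (by rwa [Nat.mul_sub_one])
      (by rw [Nat.sub_add_cancel hm]; omega)
  have hblock := Equiv.Perm.regCount_add_eq_descFactorial_mul hgap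
  rw [show r * m - r + (r - 1) = r * m - 1 by omega] at hblock
  change Equiv.Perm.regCount r (r * m) = _ * Equiv.Perm.regCount r (r * m - r)
  calc Equiv.Perm.regCount r (r * m) = Equiv.Perm.regCount r (r * m - 1 + 1) := by rw [hN]
    _ = _ := by rw [Equiv.Perm.regCount_succ_of_dvd (hN ▸ dvd_mul_right r m), hblock, mul_assoc]
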